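/- arXiv:2003.02420 — 3 statements merged into one kernel-verified Lean document; each statement's English description precedes it below -/
import Mathlib

section
/- Let 𝒰 be the Duarte family {{e₂,−e₂}, {−e₁,e₂}, {−e₁,−e₂}} and y = e₂ ∈ 𝒮(𝒰). Then for every L ≥ 1, every segment Y of L consecutive points of l_y, and every configuration η ∈ {+,−}^Y, one has Σ_{v∈η⁺} r_v(η) ≤ Σ_{u∈η⁻} r_u(η). (In particular, e₂ is a fair direction for the Duarte family.) -/
open scoped BigOperators

/-- Points of the plane lattice ℤ². -/
abbrev Pt : Type := ℤ × ℤ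

noncomputable section

/-- Inner product of an integer point with a real vector. -/
def dotIR (x : Pt) (u : ℝ × ℝ) : ℝ := (x.1 : ℝ) * u.1 + (x.2 : ℝ) * u.2

/-- Inner product of two real vectors. -/
def dotRR (u v : ℝ × ℝ) : ℝ := u.1 * v.1 + u.2 * v.2

/-- The unit circle S¹ ⊆ ℝ². -/
def unitCircle : Set (ℝ × ℝ) := {u | u.1 ^ 2 + u.2 ^ 2 = 1}

/-- The discrete half-plane H_u = {x ∈ ℤ² : ⟨x,u⟩ < 0}. -/
def halfPlane (u : ℝ × ℝ) : Set Pt := {x | dotIR x u < 0}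

/-- An update family: a finite nonempty family of finite subsets of ℤ²∖{0}. -/
def UpdateFamily (𝒰 : Finset (Finset Pt)) : Prop :=
  𝒰.Nonempty ∧ ∀ X ∈ 𝒰, (0 : Pt) ∉ X

/-- One step of 𝒰-bootstrap percolation. -/
def bootStep (𝒰 : Finset (Finset Pt)) (A : Set Pt) : Set Pt :=
  A ∪ {x : Pt | ∃ X ∈ 𝒰, ∀ v ∈ X, x + v ∈ A}

/-- Iterates of 𝒰-bootstrap percolation. -/
def bootIter (𝒰 : Finset (Finset Pt)) : ℕ → Set Pt → Set Pt
  | 0, A => A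
  | n + 1, A => bootStep 𝒰 (bootIter 𝒰 n A)

/-- The 𝒰-bootstrap closure [A] = ⋃_t A_t. -/
def bootClosure (𝒰 : Finset (Finset Pt)) (A : Set Pt) : Set Pt :=
  ⋃ n : ℕ, bootIter 𝒰 n A

/-- The stable set 𝒮(𝒰) = {u ∈ S¹ : X ⊄ H_u for all X ∈ 𝒰}. -/
def stableSet (𝒰 : Finset (Finset Pt)) : Set (ℝ × ℝ) :=
  {u | u ∈ unitCircle ∧ ∀ X ∈ 𝒰, ¬((X : Set Pt) ⊆ halfPlane u)}

/-- A rational direction: u = z/‖z‖ for some z ∈ ℤ²∖{0}. -/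
def IsRationalDir (u : ℝ × ℝ) : Prop :=
  ∃ z : Pt, z ≠ 0 ∧
    u = ((z.1 : ℝ) / Real.sqrt ((z.1 : ℝ) ^ 2 + (z.2 : ℝ) ^ 2),
         (z.2 : ℝ) / Real.sqrt ((z.1 : ℝ) ^ 2 + (z.2 : ℝ) ^ 2))

/-- Critical family: some (closed) semicircle meets 𝒮(𝒰) in a finite set and every open
semicircle meets 𝒮(𝒰). -/
def Critical (𝒰 : Finset (Finset Pt)) : Prop :=
  (∃ u ∈ unitCircle, (stableSet 𝒰 ∩ {w | 0 ≤ dotRR u w}).Finite) ∧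
  ∀ u ∈ unitCircle, (stableSet 𝒰 ∩ {w | 0 < dotRR u w}).Nonempty

/-- Supercritical family: some open semicircle is disjoint from 𝒮(𝒰). -/
def Supercritical (𝒰 : Finset (Finset Pt)) : Prop :=
  ∃ u ∈ unitCircle, stableSet 𝒰 ∩ {w | 0 < dotRR u w} = ∅

/-- Subcritical family: every semicircle has infinite intersection with 𝒮(𝒰). -/
def Subcritical (𝒰 : Finset (Finset Pt)) : Prop :=
  ∀ u ∈ unitCircle, (stableSet 𝒰 ∩ {w | 0 ≤ dotRR u w}).Infinite

/-- The translated half-plane H_u + a. -/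
def translHalfPlane (u : ℝ × ℝ) (a : Pt) : Set Pt := {x | dotIR (x - a) u < 0}

/-- A 𝒯-droplet: a nonempty intersection ⋂_{u ∈ 𝒯} (H_u + a_u). -/
def IsDroplet (𝒯 : Finset (ℝ × ℝ)) (D : Set Pt) : Prop :=
  D.Nonempty ∧ ∃ a : (ℝ × ℝ) → Pt, D = ⋂ u ∈ 𝒯, translHalfPlane u (a u)

/-- Euclidean distance between two lattice points. -/
def edist2 (x y : Pt) : ℝ :=
  Real.sqrt (((x.1 : ℝ) - (y.1 : ℝ)) ^ 2 + ((x.2 : ℝ) - (y.2 : ℝ)) ^ 2)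

/-- Diameter of a set of lattice points (w.r.t. the Euclidean distance). -/
def diam (D : Set Pt) : ℝ :=
  sSup {d : ℝ | ∃ x ∈ D, ∃ y ∈ D, d = edist2 x y}

/-- Translate of a set of lattice points. -/
def translatePt (a : Pt) (D : Set Pt) : Set Pt := (fun x => a + x) '' D

/-- The initial collection of the covering algorithm: one copy of D̂ per element of A. -/
def initColl (Dhat : Set Pt) (A : Finset Pt) : Multiset (Set Pt) :=
  A.val.map (fun a => translatePt a Dhat)

/-- Two sets lie within Euclidean distance κ of each other. -/
def DropletsClose (κ : ℝ) (D E : Set Pt) : Prop :=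
  ∃ x ∈ D, ∃ y ∈ E, edist2 x y ≤ κ

/-- D is the smallest 𝒯-droplet containing S. -/
def SmallestDroplet (𝒯 : Finset (ℝ × ℝ)) (S : Set Pt) (D : Set Pt) : Prop :=
  IsDroplet 𝒯 D ∧ S ⊆ D ∧ ∀ D' : Set Pt, IsDroplet 𝒯 D' → S ⊆ D' → D ⊆ D'

/-- One merging step of the covering algorithm. -/
def MergeStep (κ : ℝ) (𝒯 : Finset (ℝ × ℝ)) (C C' : Multiset (Set Pt)) : Prop :=
  ∃ (D₁ D₂ D₃ : Set Pt) (C₀ : Multiset (Set Pt)),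
    C = D₁ ::ₘ D₂ ::ₘ C₀ ∧ DropletsClose κ D₁ D₂ ∧
    SmallestDroplet 𝒯 (D₁ ∪ D₂) D₃ ∧ C' = D₃ ::ₘ C₀

/-- A terminal collection: all pairwise distances exceed κ. -/
def TerminalColl (κ : ℝ) (C : Multiset (Set Pt)) : Prop :=
  ∀ (D₁ D₂ : Set Pt) (C₀ : Multiset (Set Pt)),
    C = D₁ ::ₘ D₂ ::ₘ C₀ → ¬ DropletsClose κ D₁ D₂

/-- D̂ is a valid base droplet for the covering algorithm with parameter κ:
a finite 𝒯-droplet containing 0 with κ/2 ≤ diam(D̂) ≤ κ. -/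
def GoodBase (κ : ℝ) (𝒯 : Finset (ℝ × ℝ)) (Dhat : Set Pt) : Prop :=
  IsDroplet 𝒯 Dhat ∧ Dhat.Finite ∧ (0 : Pt) ∈ Dhat ∧ κ / 2 ≤ diam Dhat ∧ diam Dhat ≤ κ

/-- The collection C is reachable by the covering algorithm started from A. -/
def Reachable (κ : ℝ) (𝒯 : Finset (ℝ × ℝ)) (Dhat : Set Pt) (A : Finset Pt)
    (C : Multiset (Set Pt)) : Prop :=
  Relation.ReflTransGen (MergeStep κ 𝒯) (initColl Dhat A) C

/-- A droplet is covered by A if it belongs to some collection arising during some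
execution of the covering algorithm. -/
def CoveredBy (κ : ℝ) (𝒯 : Finset (ℝ × ℝ)) (Dhat : Set Pt) (A : Finset Pt)
    (D : Set Pt) : Prop :=
  ∃ C : Multiset (Set Pt), Reachable κ 𝒯 Dhat A C ∧ D ∈ C

/-- The lattice line l_y = {x ∈ ℤ² : ⟨x,y⟩ = 0}. -/
def lineLat (y : ℝ × ℝ) : Set Pt := {x | dotIR x y = 0}

/-- w generates the rank-one lattice l_y. -/
def GeneratesLine (w : Pt) (y : ℝ × ℝ) : Prop :=
  lineLat y = Set.range (fun k : ℤ => ((k * w.1, k * w.2) : Pt))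

/-- The segment Y = {z₀ + j·w : 0 ≤ j < L} of L consecutive points of l_y. -/
def segmentY (z₀ w : Pt) (L : ℕ) : Finset Pt :=
  (Finset.range L).image (fun j : ℕ => ((z₀.1 + (j : ℤ) * w.1, z₀.2 + (j : ℤ) * w.2) : Pt))

open Classical in
/-- The configuration of ℤ² determined by η ∈ {+,−}^Y: state − (false) on H_y, the values of η
on Y, and + (true) elsewhere. -/
def sigmaCfg (y : ℝ × ℝ) (Y : Finset Pt) (η : Pt → Bool) (x : Pt) : Bool :=
  if x ∈ halfPlane y then false else if x ∈ Y then η x else true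

/-- r_v(η): the number of rules X ∈ 𝒰 such that every point of v + X has state opposite
to that of v (in the configuration σ_η). -/
def rval (𝒰 : Finset (Finset Pt)) (y : ℝ × ℝ) (Y : Finset Pt) (η : Pt → Bool) (v : Pt) : ℕ :=
  {X : Finset Pt | X ∈ 𝒰 ∧ ∀ p ∈ X, sigmaCfg y Y η (v + p) = !(sigmaCfg y Y η v)}.ncard

/-- η with the state at v flipped. -/
def flipAt (η : Pt → Bool) (v : Pt) : Pt → Bool := fun x => if x = v then !(η x) else η x

/-- The generator 𝕍 of the restricted 1-dimensional 𝒰-voter dynamics on Y. -/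
def genV (𝒰 : Finset (Finset Pt)) (y : ℝ × ℝ) (Y : Finset Pt)
    (g : (Pt → Bool) → ℝ) (η : Pt → Bool) : ℝ :=
  ∑ v ∈ Y, ((rval 𝒰 y Y η v : ℝ) / (𝒰.card : ℝ)) * (g (flipAt η v) - g η)

/-- The natural projection ℤ² → ℤ²_n. -/
def torusProj (n : ℕ) (v : Pt) : ZMod n × ZMod n := ((v.1 : ZMod n), (v.2 : ZMod n))

/-- One step of 𝒰-bootstrap percolation on the torus ℤ²_n. -/
def torusStep (n : ℕ) (𝒰 : Finset (Finset Pt)) (A : Set (ZMod n × ZMod n)) :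
    Set (ZMod n × ZMod n) :=
  A ∪ {x | ∃ X ∈ 𝒰, ∀ v ∈ X, x + torusProj n v ∈ A}

/-- Iterates of 𝒰-bootstrap percolation on the torus. -/
def torusIter (n : ℕ) (𝒰 : Finset (Finset Pt)) :
    ℕ → Set (ZMod n × ZMod n) → Set (ZMod n × ZMod n)
  | 0, A => A
  | t + 1, A => torusStep n 𝒰 (torusIter n 𝒰 t A)

/-- The 𝒰-bootstrap closure on the torus. -/
def torusClosure (n : ℕ) (𝒰 : Finset (Finset Pt)) (A : Set (ZMod n × ZMod n)) :
    Set (ZMod n × ZMod n) :=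
  ⋃ t : ℕ, torusIter n 𝒰 t A

open Classical in
/-- ℙ_p([A] = ℤ²_n) for a p-random subset A of ℤ²_n (Bernoulli product measure written as
a finite sum over configurations). -/
def percProb (n : ℕ) (𝒰 : Finset (Finset Pt)) (p : ℝ) : ℝ :=
  if h : n = 0 then 0 else
    haveI : NeZero n := ⟨h⟩
    ∑ ω : ZMod n × ZMod n → Bool,
      (if torusClosure n 𝒰 {x | ω x = true} = Set.univ then (1 : ℝ) else 0) *
        p ^ (Finset.univ.filter (fun x => ω x = true)).card *
        (1 - p) ^ (Finset.univ.filter (fun x => ω x = false)).card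

/-- The critical probability p_c(ℤ²_n, 𝒰). -/
def pCrit (n : ℕ) (𝒰 : Finset (Finset Pt)) : ℝ :=
  sInf {p : ℝ | p ∈ Set.Icc (0 : ℝ) 1 ∧ 1 / 2 ≤ percProb n 𝒰 p}

/-- The point of S¹ at angle θ. -/
def circlePt (θ : ℝ) : ℝ × ℝ := (Real.cos θ, Real.sin θ)

end

/-- The Duarte family {{e₂,−e₂}, {−e₁,e₂}, {−e₁,−e₂}}. -/
def Duarte : Finset (Finset Pt) :=
  {({(0, 1), (0, -1)} : Finset Pt), ({(-1, 0), (0, 1)} : Finset Pt),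
    ({(-1, 0), (0, -1)} : Finset Pt)}

/-!
On the line `ℤ × {0}` every site above is `+` and every site below is `-`, so the rule
`{e₂, -e₂}` never fires, and `r_v = 1` exactly when the left neighbour `v - e₁` has the opposite
state (rule `{-e₁, e₂}` at a `-` site, `{-e₁, -e₂}` at a `+` site). Reading the states
`f c := σ_η(c, 0)` from left to right, `∑_{η⁺} r` counts the ascents `-+` of `f` inside `Y` and
`∑_{η⁻} r` counts its descents `+-`, all of which lie in `Y`. As `f` is `+` off `Y`, telescoping
over a window `(a, b]` with `f a = +` gives `#ascents + 1 = #descents + [f b = +]`.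
-/

open Finset

namespace Int

lemma card_ascents_add_eq_card_descents_add (f : ℤ → Bool) {a b : ℤ} (hab : a ≤ b) :
    #{c ∈ Ioc a b | f (c - 1) = false ∧ f c = true} + (f a).toNat =
      #{c ∈ Ioc a b | f (c - 1) = true ∧ f c = false} + (f b).toNat := by
  induction b, hab using Int.leInduction with
  | base => simp
  | succ b hab ih =>
    have hnot : b + 1 ∉ Ioc a b := by simp
    rw [← insert_Ioc_right_eq_Ioc_add_one hab, filter_insert, filter_insert, add_sub_cancel_right]
    cases hb : f b <;> cases hb' : f (b + 1) <;>
      simp [hb, hb', card_insert_of_notMem, hnot] at ih ⊢ <;> omega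

lemma card_ascents_le_card_descents (f : ℤ → Bool) (S : Finset ℤ)
    (hf : ∀ c ∉ S, f c = true) :
    #{c ∈ S | f (c - 1) = false ∧ f c = true} ≤ #{c ∈ S | f (c - 1) = true ∧ f c = false} := by
  rcases S.eq_empty_or_nonempty with rfl | ⟨c₀, hc₀⟩
  · simp
  obtain ⟨a, ha⟩ := S.bddBelow
  obtain ⟨b, hb⟩ := S.bddAbove
  have hS : S ⊆ Ioc (a - 1) b := fun c hc => mem_Ioc.2 ⟨by linarith [ha hc], hb hc⟩
  have hfa : f (a - 1) = true := hf _ fun h => by linarith [ha h]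
  calc #{c ∈ S | f (c - 1) = false ∧ f c = true}
      ≤ #{c ∈ Ioc (a - 1) b | f (c - 1) = false ∧ f c = true} :=
        card_le_card (filter_subset_filter _ hS)
    _ ≤ #{c ∈ Ioc (a - 1) b | f (c - 1) = true ∧ f c = false} := by
      have htele := card_ascents_add_eq_card_descents_add f (a := a - 1) (b := b)
        (by linarith [ha hc₀, hb hc₀])
      rw [hfa, Bool.toNat_true] at htele
      have := Bool.toNat_le (f b)
      omega
    _ = #{c ∈ S | f (c - 1) = true ∧ f c = false} := by
      congr 1
      ext c
      simp only [mem_filter]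
      exact ⟨fun h => ⟨by_contra fun hc => by simp [hf c hc] at h, h.2⟩, fun h => ⟨hS h.1, h.2⟩⟩

end Int

section DuarteOnLine

variable {Y : Finset Pt} {η : Pt → Bool}

lemma mem_halfPlane_e₂ {x : Pt} : x ∈ halfPlane ((0, 1) : ℝ × ℝ) ↔ x.2 < 0 := by
  simp [halfPlane, dotIR]

lemma mem_lineLat_e₂ {x : Pt} : x ∈ lineLat ((0, 1) : ℝ × ℝ) ↔ x.2 = 0 := by
  simp [lineLat, dotIR]

lemma GeneratesLine.mem_lineLat {w : Pt} {y : ℝ × ℝ} (h : GeneratesLine w y) : w ∈ lineLat y :=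
  h ▸ ⟨1, by simp⟩

lemma segmentY_subset_lineLat {z₀ w : Pt} {y : ℝ × ℝ} (hz : z₀ ∈ lineLat y) (hw : w ∈ lineLat y)
    (L : ℕ) : ↑(segmentY z₀ w L) ⊆ lineLat y := by
  simp only [lineLat, dotIR, Set.mem_ofPred_eq] at hz hw
  simp only [segmentY, coe_image, Set.image_subset_iff]
  intro j _
  simp only [lineLat, dotIR, Set.mem_preimage, Set.mem_ofPred_eq]
  push_cast
  linear_combination hz + (j : ℝ) * hw

lemma duarte_mem_stableSet : ((0, 1) : ℝ × ℝ) ∈ stableSet Duarte := by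
  refine ⟨by norm_num [unitCircle], fun X hX hsub => ?_⟩
  simp only [Duarte, mem_insert, mem_singleton] at hX
  rcases hX with rfl | rfl | rfl
  · simpa [mem_halfPlane_e₂] using hsub (show ((0, 1) : Pt) ∈ _ by simp)
  · simpa [mem_halfPlane_e₂] using hsub (show ((0, 1) : Pt) ∈ _ by simp)
  · simpa [mem_halfPlane_e₂] using hsub (show ((-1, 0) : Pt) ∈ _ by simp)

lemma sigmaCfg_e₂_of_neg {x : Pt} (hx : x.2 < 0) : sigmaCfg (0, 1) Y η x = false := by
  simp [sigmaCfg, mem_halfPlane_e₂.2 hx]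

lemma sigmaCfg_e₂_of_pos (hY : ↑Y ⊆ lineLat ((0, 1) : ℝ × ℝ)) {x : Pt} (hx : 0 < x.2) :
    sigmaCfg (0, 1) Y η x = true := by
  have hxY : x ∉ Y := fun h => hx.ne' (mem_lineLat_e₂.1 (hY h))
  simp [sigmaCfg, mem_halfPlane_e₂, hx.le, hxY]

lemma rval_duarte_e₂ (hY : ↑Y ⊆ lineLat ((0, 1) : ℝ × ℝ)) (c : ℤ) :
    rval Duarte (0, 1) Y η (c, 0) =
      if sigmaCfg (0, 1) Y η (c - 1, 0) = sigmaCfg (0, 1) Y η (c, 0) then 0 else 1 := by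
  have hup : sigmaCfg (0, 1) Y η ((c, 0) + (0, 1)) = true := sigmaCfg_e₂_of_pos hY (by simp)
  have hdown : sigmaCfg (0, 1) Y η ((c, 0) + (0, -1)) = false := sigmaCfg_e₂_of_neg (by simp)
  have hleft : ((c, 0) : Pt) + (-1, 0) = (c - 1, 0) := by simp [sub_eq_add_neg]
  rw [rval, ← coe_filter, Set.ncard_coe_finset]
  simp only [Duarte, filter_insert, filter_singleton, mem_insert, mem_singleton,
    forall_eq_or_imp, forall_eq, hup, hdown, hleft]
  generalize sigmaCfg (0, 1) Y η (c - 1, 0) = l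
  generalize sigmaCfg (0, 1) Y η (c, 0) = m
  cases l <;> cases m <;> decide

lemma sum_rval_duarte_e₂ (hY : ↑Y ⊆ lineLat ((0, 1) : ℝ × ℝ)) (s : Bool) :
    ∑ v ∈ Y with η v = s, rval Duarte (0, 1) Y η v =
      #{c ∈ Y.image Prod.fst | sigmaCfg (0, 1) Y η (c - 1, 0) = !s ∧
        sigmaCfg (0, 1) Y η (c, 0) = s} := by
  have hline : ∀ v ∈ Y, v = (v.1, 0) := fun v hv => Prod.ext rfl (mem_lineLat_e₂.1 (hY hv))
  have hYS : Y = (Y.image Prod.fst).image (fun c => ((c, 0) : Pt)) := by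
    rw [image_image]
    exact (image_congr fun v hv => (hline v hv).symm).trans image_id |>.symm
  have hstate : ∀ v ∈ Y, sigmaCfg (0, 1) Y η v = η v := fun v hv => by
    simp [sigmaCfg, mem_halfPlane_e₂, mem_lineLat_e₂.1 (hY hv), hv]
  have hsum := sum_image (f := fun v => if η v = s then rval Duarte (0, 1) Y η v else 0)
    (s := Y.image Prod.fst) (g := fun c => ((c, 0) : Pt)) fun _ _ _ _ h => (Prod.mk.inj h).1
  rw [← hYS] at hsum
  rw [sum_filter, card_filter, hsum]
  refine sum_congr rfl fun c hc => ?_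
  have hcY : ((c, 0) : Pt) ∈ Y := hYS ▸ mem_image_of_mem _ hc
  rw [rval_duarte_e₂ hY, ← hstate _ hcY]
  cases s <;> cases sigmaCfg (0, 1) Y η (c - 1, 0) <;> cases sigmaCfg (0, 1) Y η (c, 0) <;> rfl

theorem duarte_fair_of_subset_lineLat (hY : ↑Y ⊆ lineLat ((0, 1) : ℝ × ℝ)) :
    ∑ v ∈ Y with η v = true, rval Duarte (0, 1) Y η v ≤
      ∑ v ∈ Y with η v = false, rval Duarte (0, 1) Y η v := by
  rw [sum_rval_duarte_e₂ hY, sum_rval_duarte_e₂ hY, Bool.not_true, Bool.not_false]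
  refine Int.card_ascents_le_card_descents (fun c => sigmaCfg (0, 1) Y η (c, 0)) _ fun c hc => ?_
  have hcY : ((c, 0) : Pt) ∉ Y := fun h => hc (mem_image_of_mem Prod.fst h)
  simp [sigmaCfg, mem_halfPlane_e₂, hcY]

end DuarteOnLine

/-- y = e₂ is in 𝒮(Duarte) and the fairness inequality holds for every
configuration on every segment of l_y (so e₂ is a fair direction for the Duarte family). -/
theorem stmt17 :
    ((0, 1) : ℝ × ℝ) ∈ stableSet Duarte ∧
    ∀ L : ℕ, 1 ≤ L → ∀ z₀ w : Pt, z₀ ∈ lineLat ((0, 1) : ℝ × ℝ) →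
      GeneratesLine w ((0, 1) : ℝ × ℝ) → ∀ η : Pt → Bool,
        ∑ v ∈ (segmentY z₀ w L).filter (fun v => η v = true),
            rval Duarte ((0, 1) : ℝ × ℝ) (segmentY z₀ w L) η v ≤
        ∑ u ∈ (segmentY z₀ w L).filter (fun v => η v = false),
            rval Duarte ((0, 1) : ℝ × ℝ) (segmentY z₀ w L) η u :=
  ⟨duarte_mem_stableSet, fun L _ _ _ hz hw _ =>
    duarte_fair_of_subset_lineLat (segmentY_subset_lineLat hz hw.mem_lineLat L)⟩
end

section
/- Let 𝒩₂² be the family of all subsets of size at least 2 of {e₁, −e₁, e₂, −e₂} and y = e₂ ∈ 𝒮(𝒩₂²). Let L ≥ 1, let Y = {(j,0) : 0 ≤ j < L}, and let η ∈ {+,−}^Y be any block configuration, i.e. there exist 0 ≤ a ≤ b ≤ L with η((j,0)) = − exactly when a ≤ j < b (a block of +'s, followed by a block of −'s, followed by a block of +'s, where any of these blocks may be empty). Then Σ_{v∈η⁺} r_v(η) ≤ Σ_{u∈η⁻} r_u(η). -/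
open scoped BigOperators

/-- The family 𝒩₂²: all subsets of size at least 2 of {e₁,−e₁,e₂,−e₂}. -/
def N22 : Finset (Finset Pt) :=
  (({(1, 0), (-1, 0), (0, 1), (0, -1)} : Finset Pt).powerset).filter (fun X => 2 ≤ X.card)


/-! ### Auxiliary machinery for stmt18 -/

/-- Number of rules of `N22` applicable at a row-0 site whose left/self/right states
are `l`/`s`/`r`, with state `true` above and `false` below. -/
def cnt (l s r : Bool) : ℕ :=
  (N22.filter (fun X => ∀ p ∈ X,
    (if p = ((1:ℤ),(0:ℤ)) then r else if p = ((-1:ℤ),(0:ℤ)) then l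
     else if p = ((0:ℤ),(1:ℤ)) then true else false) = !s)).card

lemma cnt_ttt : cnt true true true = 0 := by decide
lemma cnt_ftt : cnt false true true = 1 := by decide
lemma cnt_ttf : cnt true true false = 1 := by decide
lemma cnt_tft : cnt true false true = 4 := by decide
lemma cnt_tff : cnt true false false = 1 := by decide
lemma cnt_fft : cnt false false true = 1 := by decide

lemma memY_iff (L : ℕ) (x : Pt) :
    x ∈ segmentY (0,0) (1,0) L ↔ 0 ≤ x.1 ∧ x.1 < (L:ℤ) ∧ x.2 = 0 := by
  simp only [segmentY, Finset.mem_image, Finset.mem_range]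
  constructor
  · rintro ⟨j, hj, rfl⟩
    refine ⟨?_, ?_, ?_⟩
    · simp
    · simp; omega
    · simp
  · rintro ⟨h0, hL, h2⟩
    refine ⟨x.1.toNat, by omega, ?_⟩
    have : ((x.1.toNat : ℤ)) = x.1 := Int.toNat_of_nonneg h0
    ext <;> simp [this, h2]

/-- The state of the row-0 site `(k,0)` in the configuration `σ_η`. -/
def st (L : ℕ) (η : Pt → Bool) (k : ℤ) : Bool :=
  if 0 ≤ k ∧ k < (L:ℤ) then η (k, 0) else true

lemma sigma_row0 (L : ℕ) (η : Pt → Bool) (k : ℤ) :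
    sigmaCfg (0,1) (segmentY (0,0) (1,0) L) η (k, 0) = st L η k := by
  have h1 : ((k,(0:ℤ)) : Pt) ∉ halfPlane (0,1) := by
    simp [halfPlane, dotIR]
  rw [sigmaCfg, if_neg h1, st]
  by_cases h : 0 ≤ k ∧ k < (L:ℤ)
  · rw [if_pos ((memY_iff L _).2 ⟨h.1, h.2, rfl⟩), if_pos h]
  · rw [if_neg (fun hm => h ⟨((memY_iff L _).1 hm).1, ((memY_iff L _).1 hm).2.1⟩), if_neg h]

lemma sigma_up (L : ℕ) (η : Pt → Bool) (k : ℤ) :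
    sigmaCfg (0,1) (segmentY (0,0) (1,0) L) η (k, 1) = true := by
  have h1 : ((k,(1:ℤ)) : Pt) ∉ halfPlane (0,1) := by simp [halfPlane, dotIR]
  have h2 : ((k,(1:ℤ)) : Pt) ∉ segmentY (0,0) (1,0) L := by
    intro hm; simpa using ((memY_iff L _).1 hm).2.2
  rw [sigmaCfg, if_neg h1, if_neg h2]

lemma sigma_dn (L : ℕ) (η : Pt → Bool) (k : ℤ) :
    sigmaCfg (0,1) (segmentY (0,0) (1,0) L) η (k, -1) = false := by
  have h1 : ((k,(-1:ℤ)) : Pt) ∈ halfPlane (0,1) := by simp [halfPlane, dotIR]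
  rw [sigmaCfg, if_pos h1]

lemma rval_eq_cnt (y : ℝ × ℝ) (Y : Finset Pt) (η : Pt → Bool) (v : Pt) (l s r : Bool)
    (hv : sigmaCfg y Y η v = s)
    (hl : sigmaCfg y Y η (v + (-1,0)) = l)
    (hr : sigmaCfg y Y η (v + (1,0)) = r)
    (ht : sigmaCfg y Y η (v + (0,1)) = true)
    (hb : sigmaCfg y Y η (v + (0,-1)) = false) :
    rval N22 y Y η v = cnt l s r := by
  classical
  have hset : {X : Finset Pt | X ∈ N22 ∧ ∀ p ∈ X, sigmaCfg y Y η (v + p) = !(sigmaCfg y Y η v)}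
      = ↑(N22.filter (fun X => ∀ p ∈ X,
        (if p = ((1:ℤ),(0:ℤ)) then r else if p = ((-1:ℤ),(0:ℤ)) then l
         else if p = ((0:ℤ),(1:ℤ)) then true else false) = !s)) := by
    ext X
    simp only [Set.mem_setOf_eq, Finset.coe_filter, Finset.mem_filter]
    refine and_congr_right fun hX => ?_
    have hsub : X ⊆ ({(1, 0), (-1, 0), (0, 1), (0, -1)} : Finset Pt) :=
      Finset.mem_powerset.1 (Finset.mem_filter.1 hX).1
    refine forall₂_congr fun p hp => ?_
    have hp4 := hsub hp
    rw [hv]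
    fin_cases hp4
    · rw [hr]; simp
    · rw [hl]; norm_num
    · rw [ht]; norm_num
    · rw [hb]; norm_num
  rw [rval, hset, Set.ncard_coe_finset, cnt]

lemma sum_seg (L : ℕ) (f : Pt → ℕ) :
    ∑ v ∈ segmentY (0,0) (1,0) L, f v = ∑ j ∈ Finset.range L, f ((j:ℤ), 0) := by
  rw [segmentY, Finset.sum_image (by intro i _ j _ h; simpa using h)]
  exact Finset.sum_congr rfl fun j _ => by simp

/-- for 𝒩₂², y = e₂ and Y = {(j,0) : 0 ≤ j < L}, every block configuration
(+'s, then −'s, then +'s) satisfies the fairness inequality. -/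
theorem stmt18 (L : ℕ) (hL : 1 ≤ L) (η : Pt → Bool)
    (hblock : ∃ a b : ℕ, a ≤ b ∧ b ≤ L ∧
      ∀ j : ℕ, j < L → (η ((j : ℤ), 0) = false ↔ (a ≤ j ∧ j < b))) :
    let y : ℝ × ℝ := (0, 1)
    let Y : Finset Pt := segmentY (0, 0) (1, 0) L
    (∑ v ∈ Y.filter (fun v => η v = true), rval N22 y Y η v) ≤
      ∑ u ∈ Y.filter (fun v => η v = false), rval N22 y Y η u := by
  intro y Y
  obtain ⟨a, b, hab, hbL, hblk⟩ := hblock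
  classical
  have hst : ∀ k : ℤ, (st L η k = false ↔ ((a:ℤ) ≤ k ∧ k < (b:ℤ))) := by
    intro k
    rw [st]
    by_cases h : 0 ≤ k ∧ k < (L:ℤ)
    · rw [if_pos h]
      have h2 := hblk k.toNat (by omega)
      rw [show ((k.toNat:ℤ)) = k from Int.toNat_of_nonneg h.1] at h2
      rw [h2]; omega
    · rw [if_neg h]
      constructor
      · intro hh; simp at hh
      · intro hh; exact absurd hh (by omega)
  have stT : ∀ k : ℤ, ¬((a:ℤ) ≤ k ∧ k < (b:ℤ)) → st L η k = true := by
    intro k h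
    cases hq : st L η k
    · exact absurd ((hst k).1 hq) h
    · rfl
  have stF : ∀ k : ℤ, ((a:ℤ) ≤ k ∧ k < (b:ℤ)) → st L η k = false := fun k h => (hst k).2 h
  have stEta : ∀ j : ℕ, j < L → st L η (j:ℤ) = η ((j:ℤ),0) := by
    intro j hj
    rw [st, if_pos ⟨by positivity, by exact_mod_cast hj⟩]
  have hF : ∀ j : ℕ, j < L → rval N22 (0,1) (segmentY (0,0) (1,0) L) η ((j:ℤ), 0)
      = cnt (st L η ((j:ℤ)-1)) (st L η (j:ℤ)) (st L η ((j:ℤ)+1)) := by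
    intro j hj
    apply rval_eq_cnt
    · exact sigma_row0 L η j
    · rw [show ((j:ℤ),(0:ℤ)) + (-1,0) = ((j:ℤ)-1, 0) from by simp [Prod.ext_iff]; omega]
      exact sigma_row0 L η _
    · rw [show ((j:ℤ),(0:ℤ)) + (1,0) = ((j:ℤ)+1, 0) from by simp [Prod.ext_iff]]
      exact sigma_row0 L η _
    · rw [show ((j:ℤ),(0:ℤ)) + (0,1) = ((j:ℤ), 1) from by simp [Prod.ext_iff]]
      exact sigma_up L η _
    · rw [show ((j:ℤ),(0:ℤ)) + (0,-1) = ((j:ℤ), -1) from by simp [Prod.ext_iff]]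
      exact sigma_dn L η _
  show (∑ v ∈ (segmentY (0,0) (1,0) L).filter (fun v => η v = true),
        rval N22 ((0:ℝ),(1:ℝ)) (segmentY (0,0) (1,0) L) η v) ≤
      ∑ u ∈ (segmentY (0,0) (1,0) L).filter (fun v => η v = false),
        rval N22 ((0:ℝ),(1:ℝ)) (segmentY (0,0) (1,0) L) η u
  rw [Finset.sum_filter, Finset.sum_filter, sum_seg, sum_seg]
  by_cases hcase : a < b
  · -- LHS ≤ number of +/− boundaries ≤ 2 ≤ RHS
    have hLHS : (∑ j ∈ Finset.range L, if η ((j:ℤ),0) = true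
          then rval N22 ((0:ℝ),(1:ℝ)) (segmentY (0,0) (1,0) L) η ((j:ℤ),0) else 0)
        ≤ ∑ j ∈ Finset.range L, (if (j+1 = a ∨ j = b) then 1 else 0) := by
      apply Finset.sum_le_sum
      intro j hj
      rw [Finset.mem_range] at hj
      by_cases hs : η ((j:ℤ),0) = true
      · rw [if_pos hs, hF j hj]
        have hsj : st L η (j:ℤ) = true := by rw [stEta j hj]; exact hs
        have hsj' : ¬((a:ℤ) ≤ (j:ℤ) ∧ (j:ℤ) < (b:ℤ)) := by
          intro hh; rw [(hst _).2 hh] at hsj; simp at hsj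
        rw [hsj]
        cases hl' : st L η ((j:ℤ)-1) <;> cases hr' : st L η ((j:ℤ)+1)
        · have h1 := (hst _).1 hl'
          have h2 := (hst _).1 hr'
          exact absurd ⟨by omega, by omega⟩ hsj'
        · have h1 := (hst _).1 hl'
          have hjb : j = b := by omega
          rw [cnt_ftt, if_pos (Or.inr hjb)]
        · have h2 := (hst _).1 hr'
          have hja : j + 1 = a := by omega
          rw [cnt_ttf, if_pos (Or.inl hja)]
        · rw [cnt_ttt]; exact Nat.zero_le _
      · rw [if_neg hs]; exact Nat.zero_le _
    have hIND : (∑ j ∈ Finset.range L, if (j+1 = a ∨ j = b) then 1 else 0) ≤ 2 := by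
      rw [← Finset.card_filter]
      calc ((Finset.range L).filter (fun j => j+1 = a ∨ j = b)).card
          ≤ ({a-1, b} : Finset ℕ).card := by
            apply Finset.card_le_card
            intro j hj
            rw [Finset.mem_filter] at hj
            simp only [Finset.mem_insert, Finset.mem_singleton]
            rcases hj.2 with h|h
            · left; omega
            · right; exact h
        _ ≤ 2 := le_trans (Finset.card_insert_le _ _) (by simp)
    have hRHS : 2 ≤ ∑ j ∈ Finset.range L, (if η ((j:ℤ),0) = false
          then rval N22 ((0:ℝ),(1:ℝ)) (segmentY (0,0) (1,0) L) η ((j:ℤ),0) else 0) := by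
      set f : ℕ → ℕ := fun j => if η ((j:ℤ),0) = false
          then rval N22 ((0:ℝ),(1:ℝ)) (segmentY (0,0) (1,0) L) η ((j:ℤ),0) else 0 with hf
      have haL : a < L := by omega
      have hηa : η ((a:ℤ),0) = false := by
        rw [← stEta a haL]; exact stF _ ⟨le_refl _, by exact_mod_cast hcase⟩
      by_cases hb1 : b = a + 1
      · have hfa : f a = 4 := by
          rw [hf]
          simp only []
          rw [if_pos hηa, hF a haL,
            stT ((a:ℤ)-1) (by omega), stF (a:ℤ) ⟨le_refl _, by omega⟩,
            stT ((a:ℤ)+1) (by omega), cnt_tft]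
        calc 2 ≤ f a := by omega
          _ ≤ _ := Finset.single_le_sum (f := f) (fun i _ => Nat.zero_le _)
              (Finset.mem_range.2 haL)
      · have hb2 : a + 2 ≤ b := by omega
        have hbL' : b - 1 < L := by omega
        have hsubset : ({a, b-1} : Finset ℕ) ⊆ Finset.range L := by
          intro x hx
          simp only [Finset.mem_insert, Finset.mem_singleton] at hx
          rcases hx with rfl|rfl <;> exact Finset.mem_range.2 (by omega)
        have hsum : ∑ j ∈ ({a, b-1} : Finset ℕ), f j ≤ ∑ j ∈ Finset.range L, f j :=
          Finset.sum_le_sum_of_subset hsubset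
        have hne : a ∉ ({b-1} : Finset ℕ) := by simp; omega
        rw [Finset.sum_insert hne, Finset.sum_singleton] at hsum
        have hc : (((b-1:ℕ)):ℤ) = (b:ℤ)-1 := by omega
        have hfa : f a = 1 := by
          simp only [hf]
          rw [if_pos hηa, hF a haL,
            stT ((a:ℤ)-1) (by omega), stF (a:ℤ) ⟨le_refl _, by omega⟩,
            stF ((a:ℤ)+1) (by omega), cnt_tff]
        have hηb : η (((b-1:ℕ):ℤ),0) = false := by
          rw [← stEta (b-1) hbL']; exact stF _ (by omega)
        have hfb : f (b-1) = 1 := by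
          simp only [hf]
          rw [if_pos hηb, hF (b-1) hbL', hc,
            stF ((b:ℤ)-1-1) (by omega), stF ((b:ℤ)-1) (by omega),
            stT ((b:ℤ)-1+1) (by omega), cnt_fft]
        exact le_trans (by omega : 2 ≤ f a + f (b-1)) hsum
    omega
  · -- no minus block: both sides are 0 on the left
    have h0 : (∑ j ∈ Finset.range L, if η ((j:ℤ),0) = true
          then rval N22 ((0:ℝ),(1:ℝ)) (segmentY (0,0) (1,0) L) η ((j:ℤ),0) else 0) = 0 := by
      apply Finset.sum_eq_zero
      intro j hj
      rw [Finset.mem_range] at hj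
      by_cases hs : η ((j:ℤ),0) = true
      · rw [if_pos hs, hF j hj,
          stT ((j:ℤ)-1) (by omega), stT (j:ℤ) (by omega), stT ((j:ℤ)+1) (by omega), cnt_ttt]
      · rw [if_neg hs]
    rw [h0]
    exact Nat.zero_le _
end

section
/- Let 𝒰_▷ := {{(−1,1),(−1,−1)}, {(0,1),(1,1)}, {(0,−1),(1,−1)}}, and let X₀ ⊆ ℤ²∖{0} be any finite nonempty set with X₀ ⊆ H_{e₁} (i.e. x₁ < 0 for every x = (x₁,x₂) ∈ X₀), such that there exist x ∈ X₀ with x₂ ≥ −x₁ and x′ ∈ X₀ with x′₂ ≤ x′₁. Then the family 𝒰_▷ ∪ {X₀} has the same stable set as 𝒰_▷, namely 𝒮(𝒰_▷ ∪ {X₀}) = 𝒮(𝒰_▷) = {−e₁, (1/√2)(1,1), (1/√2)(1,−1)}; in particular 𝒰_▷ ∪ {X₀} is a critical two-dimensional update family. -/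
open scoped BigOperators

/-- The family 𝒰_▷. -/
def Utri : Finset (Finset Pt) :=
  {({(-1, 1), (-1, -1)} : Finset Pt), ({(0, 1), (1, 1)} : Finset Pt),
    ({(0, -1), (1, -1)} : Finset Pt)}


lemma mem_stable_Utri (u : ℝ × ℝ) :
    u ∈ stableSet Utri ↔ u ∈ unitCircle ∧
      (u.1 ≤ u.2 ∨ u.1 ≤ -u.2) ∧ (0 ≤ u.2 ∨ 0 ≤ u.1 + u.2) ∧ (u.2 ≤ 0 ∨ 0 ≤ u.1 - u.2) := by
  simp only [stableSet, Utri, Set.mem_setOf_eq, Finset.mem_insert, Finset.mem_singleton,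
    forall_eq_or_imp, forall_eq, Finset.coe_insert, Finset.coe_singleton,
    Set.insert_subset_iff, Set.singleton_subset_iff, halfPlane, dotIR, Set.mem_setOf_eq,
    not_and_or, not_lt]
  push_cast
  constructor
  · rintro ⟨h1, h2, h3, h4⟩
    refine ⟨h1, ?_, ?_, ?_⟩
    · rcases h2 with h | h
      · left; linarith
      · right; linarith
    · rcases h3 with h | h
      · left; linarith
      · right; linarith
    · rcases h4 with h | h
      · left; linarith
      · right; linarith
  · rintro ⟨h1, h2, h3, h4⟩
    refine ⟨h1, ?_, ?_, ?_⟩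
    · rcases h2 with h | h
      · left; linarith
      · right; linarith
    · rcases h3 with h | h
      · left; linarith
      · right; linarith
    · rcases h4 with h | h
      · left; linarith
      · right; linarith

lemma sqrt2_sq : Real.sqrt 2 ^ 2 = 2 := Real.sq_sqrt (by norm_num)

lemma sqrt2_pos : 0 < Real.sqrt 2 := Real.sqrt_pos.mpr (by norm_num)

lemma stable_Utri_eq :
    stableSet Utri =
      ({(-1, 0), (1 / Real.sqrt 2, 1 / Real.sqrt 2),
        (1 / Real.sqrt 2, -(1 / Real.sqrt 2))} : Set (ℝ × ℝ)) := by
  have h2 := sqrt2_sq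
  have hp := sqrt2_pos
  have hss : (1 / Real.sqrt 2) ^ 2 = 1 / 2 := by
    rw [div_pow, h2]; norm_num
  have hspos : 0 < 1 / Real.sqrt 2 := by positivity
  ext u
  rw [mem_stable_Utri]
  simp only [Set.mem_insert_iff, Set.mem_singleton_iff, Prod.ext_iff, unitCircle,
    Set.mem_setOf_eq]
  constructor
  · rintro ⟨h1, hA, hB, hC⟩
    rcases lt_trichotomy u.2 0 with hu | hu | hu
    · -- u.2 < 0 : u = (1/√2, -(1/√2))
      have hB' : 0 ≤ u.1 + u.2 := by rcases hB with h | h <;> linarith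
      have h12 : u.1 = -u.2 := by
        rcases hA with h | h
        · linarith
        · linarith
      right; right
      have hq : u.1 ^ 2 = (1 / Real.sqrt 2) ^ 2 := by rw [hss]; nlinarith
      have hu1 : u.1 = 1 / Real.sqrt 2 := by nlinarith [sq_nonneg (u.1 - 1 / Real.sqrt 2)]
      exact ⟨hu1, by linarith [h12]⟩
    · -- u.2 = 0 : u = (-1, 0)
      left
      have h1' : u.1 ^ 2 = 1 := by rw [hu] at h1; simpa using h1
      have hneg : u.1 ≤ 0 := by rcases hA with h | h <;> linarith
      have : (u.1 + 1) * (u.1 - 1) = 0 := by nlinarith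
      rcases mul_eq_zero.mp this with h | h
      · exact ⟨by linarith, hu⟩
      · exfalso; linarith
    · -- u.2 > 0 : u = (1/√2, 1/√2)
      have hC' : 0 ≤ u.1 - u.2 := by rcases hC with h | h <;> linarith
      have h12 : u.1 = u.2 := by
        rcases hA with h | h
        · linarith
        · linarith
      right; left
      have hu1 : u.1 = 1 / Real.sqrt 2 := by nlinarith [sq_nonneg (u.1 - 1 / Real.sqrt 2)]
      exact ⟨hu1, by linarith⟩
  · rintro (⟨h1, h2'⟩ | ⟨h1, h2'⟩ | ⟨h1, h2'⟩) <;> rw [h1, h2'] <;>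
      refine ⟨by nlinarith, ?_, ?_, ?_⟩ <;> norm_num

/-- adding to 𝒰_▷ any rule X₀ ⊆ H_{e₁} containing points x with x₂ ≥ −x₁ and
x′ with x′₂ ≤ x′₁ does not change the stable set; in particular the enlarged family is a
critical update family. -/
theorem stmt19 (X₀ : Finset Pt) (hne : X₀.Nonempty) (h0 : (0 : Pt) ∉ X₀)
    (hH : ∀ x ∈ X₀, x.1 < 0)
    (hx : ∃ x ∈ X₀, -x.1 ≤ x.2) (hx' : ∃ x' ∈ X₀, x'.2 ≤ x'.1) :
    stableSet (Utri ∪ {X₀}) = stableSet Utri ∧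
    stableSet Utri =
      ({(-1, 0), (1 / Real.sqrt 2, 1 / Real.sqrt 2),
        (1 / Real.sqrt 2, -(1 / Real.sqrt 2))} : Set (ℝ × ℝ)) ∧
    Critical (Utri ∪ {X₀}) := by
  have h2 := sqrt2_sq
  have hp := sqrt2_pos
  have hspos : 0 < 1 / Real.sqrt 2 := by positivity
  have hX0 : ∀ u ∈ stableSet Utri, ¬((X₀ : Set Pt) ⊆ halfPlane u) := by
    intro u hu hsub
    rw [stable_Utri_eq] at hu
    simp only [Set.mem_insert_iff, Set.mem_singleton_iff] at hu
    rcases hu with hu | hu | hu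
    · obtain ⟨x, hxm⟩ := hne
      have := hsub (Finset.mem_coe.mpr hxm)
      simp only [halfPlane, dotIR, hu, Set.mem_setOf_eq] at this
      have hx1 := hH x hxm
      have : -(x.1 : ℝ) < 0 := by linarith
      have : (0 : ℝ) < x.1 := by linarith
      exact absurd hx1 (by exact_mod_cast not_lt.mpr (le_of_lt (by exact_mod_cast this)))
    · obtain ⟨x, hxm, hxv⟩ := hx
      have := hsub (Finset.mem_coe.mpr hxm)
      simp only [halfPlane, dotIR, hu, Set.mem_setOf_eq] at this
      have hxv' : (0 : ℝ) ≤ (x.1 : ℝ) + (x.2 : ℝ) := by exact_mod_cast (by linarith : (0:ℤ) ≤ x.1 + x.2)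
      nlinarith
    · obtain ⟨x, hxm, hxv⟩ := hx'
      have := hsub (Finset.mem_coe.mpr hxm)
      simp only [halfPlane, dotIR, hu, Set.mem_setOf_eq] at this
      have hxv' : (0 : ℝ) ≤ (x.1 : ℝ) - (x.2 : ℝ) := by exact_mod_cast (by linarith : (0:ℤ) ≤ x.1 - x.2)
      nlinarith
  have heq : stableSet (Utri ∪ {X₀}) = stableSet Utri := by
    ext u
    simp only [stableSet, Set.mem_setOf_eq, Finset.mem_union, Finset.mem_singleton]
    constructor
    · rintro ⟨h1, h2'⟩
      exact ⟨h1, fun X hX => h2' X (Or.inl hX)⟩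
    · rintro ⟨h1, h2'⟩
      refine ⟨h1, fun X hX => ?_⟩
      rcases hX with hX | hX
      · exact h2' X hX
      · subst hX; exact hX0 u ⟨h1, h2'⟩
  refine ⟨heq, stable_Utri_eq, ?_, ?_⟩
  · refine ⟨(1, 0), by simp [unitCircle], ?_⟩
    rw [heq, stable_Utri_eq]
    exact Set.Finite.inter_of_left (by
      exact (Set.finite_singleton _).insert _ |>.insert _) _
  · intro u hu
    rw [heq, stable_Utri_eq]
    have h1 : u.1 ^ 2 + u.2 ^ 2 = 1 := hu
    rcases lt_or_ge u.1 0 with hneg | hpos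
    · exact ⟨(-1, 0), by simp, by simp only [dotRR, Set.mem_setOf_eq]; nlinarith⟩
    · rcases le_or_gt 0 u.2 with hu2 | hu2
      · refine ⟨(1 / Real.sqrt 2, 1 / Real.sqrt 2), by simp, ?_⟩
        simp only [dotRR, Set.mem_setOf_eq]
        have : 0 < u.1 + u.2 := by nlinarith
        nlinarith
      · refine ⟨(1 / Real.sqrt 2, -(1 / Real.sqrt 2)), by simp, ?_⟩
        simp only [dotRR, Set.mem_setOf_eq]
        have : 0 < u.1 - u.2 := by nlinarith
        nlinarith
end
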